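/- A partition with distinct parts and k parts is an (s,s+1)-core if and only if its largest part is at most s-k; such partitions are in bijection with k-element subsets of {1,2,...,s-k}, by mapping a partition to the set of its parts. -/
import Mathlib

lemma sigma_partition_ext {n m : ℕ} (P : Nat.Partition n) (Q : Nat.Partition m)
    (h : P.parts = Q.parts) : (⟨n, P⟩ : Σ n, Nat.Partition n) = ⟨m, Q⟩ := by
  have hnm : n = m := by rw [← P.parts_sum, ← Q.parts_sum, h]
  subst hnm
  cases P; cases Q; simp_all

/-- A partition with distinct parts and `k` parts is an `(s,s+1)`-core
(i.e., `k + largest part ≤ s`, Straub's characterization) iff its largest part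
is at most `s - k`; and such partitions are in bijection with `k`-element
subsets of `{1, ..., s-k}`, via the map sending a partition to its set of parts. -/
theorem cores_iff_and_bijection (s k : ℕ) :
    (∀ (n : ℕ) (P : Nat.Partition n), P.parts.Nodup → P.parts.card = k →
      ((k + P.parts.sup ≤ s) ↔ P.parts.sup ≤ s - k)) ∧
    ∃ e : {P : Σ n, Nat.Partition n //
        P.2.parts.Nodup ∧ P.2.parts.card = k ∧ k + P.2.parts.sup ≤ s} ≃
        {S : Finset ℕ // S ⊆ Finset.Icc 1 (s - k) ∧ S.card = k},
      ∀ P, (e P : Finset ℕ) = P.1.2.parts.toFinset := by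
  constructor
  · intro n P hnd hk
    rcases Nat.eq_zero_or_pos k with hk0 | hkpos
    · omega
    · have hne : P.parts ≠ 0 := by
        intro h; rw [h] at hk; simp at hk; omega
      obtain ⟨a, ha⟩ := Multiset.exists_mem_of_ne_zero hne
      have h1 : 1 ≤ a := P.parts_pos ha
      have h2 : a ≤ P.parts.sup := Multiset.le_sup ha
      omega
  · refine ⟨⟨fun P => ⟨P.1.2.parts.toFinset, ?_, ?_⟩,
      fun S => ⟨⟨S.1.1.sum, ⟨S.1.1, fun {i} hi => ?_, rfl⟩⟩, ?_, ?_, ?_⟩, ?_, ?_⟩,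
      fun P => rfl⟩
    · -- subset
      intro x hx
      rw [Multiset.mem_toFinset] at hx
      have h1 : 1 ≤ x := P.1.2.parts_pos hx
      have h2 : x ≤ P.1.2.parts.sup := Multiset.le_sup hx
      have h3 := P.2.2.2
      simp [Finset.mem_Icc]; omega
    · -- card
      rw [Multiset.toFinset_card_of_nodup P.2.1, P.2.2.1]
    · -- parts_pos
      have := S.2.1 hi
      simp [Finset.mem_Icc] at this; omega
    · -- nodup
      exact S.1.2
    · -- card
      exact S.2.2
    · -- k + sup ≤ s
      show k + S.1.1.sup ≤ s
      have hle : S.1.1.sup ≤ s - k := by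
        apply Multiset.sup_le.mpr
        intro b hb
        have := S.2.1 hb
        simp [Finset.mem_Icc] at this; omega
      rcases Nat.eq_zero_or_pos k with hk0 | hkpos
      · omega
      · have hne : S.1.1 ≠ 0 := by
          intro h
          have := S.2.2
          rw [Finset.card, h] at this
          simp at this; omega
        obtain ⟨a, ha⟩ := Multiset.exists_mem_of_ne_zero hne
        have := S.2.1 ha
        simp [Finset.mem_Icc] at this
        omega
    · -- left inverse
      intro P
      apply Subtype.ext
      apply sigma_partition_ext
      exact (Multiset.toFinset_val _).trans (Multiset.dedup_eq_self.mpr P.2.1)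
    · -- right inverse
      intro S
      apply Subtype.ext
      exact Finset.val_toFinset _
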